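/- arXiv:2511.18142 — 10 statements merged into one kernel-verified Lean document; each statement's English description precedes it below -/
import Mathlib

section
/- For every p > 0 and every x in the open interval (0,1), the inequality (p+1)·x^{1+2/p} − (p+2)·x^{1+1/p} + 1 > 0 holds. -/
open Real

theorem stmt0 (p x : ℝ) (hp : 0 < p) (hx : x ∈ Set.Ioo (0:ℝ) 1) :
    0 < (p + 1) * x ^ (1 + 2 / p) - (p + 2) * x ^ (1 + 1 / p) + 1 := by
  obtain ⟨hx0, hx1⟩ := hx
  set a : ℝ := 1 + 2 / p with ha
  set b : ℝ := 1 + 1 / p with hb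
  set f : ℝ → ℝ := fun y => (p + 1) * y ^ a - (p + 2) * y ^ b + 1 with hf
  have key : ∀ y : ℝ, 0 < y →
      HasDerivAt f ((p+1) * (a * y ^ (a-1)) - (p+2) * (b * y ^ (b-1))) y := by
    intro y hy
    have h1 := (Real.hasDerivAt_rpow_const (x := y) (p := a) (Or.inl hy.ne')).const_mul (p+1)
    have h2 := (Real.hasDerivAt_rpow_const (x := y) (p := b) (Or.inl hy.ne')).const_mul (p+2)
    exact (h1.sub h2).add_const 1
  have hanti : StrictAntiOn f (Set.Icc x 1) := by
    apply strictAntiOn_of_deriv_neg (convex_Icc x 1)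
    · intro y hy
      exact (key y (hx0.trans_le hy.1)).continuousAt.continuousWithinAt
    · intro y hy
      rw [interior_Icc] at hy
      have hy0 : 0 < y := hx0.trans hy.1
      rw [(key y hy0).deriv]
      have hlt : y ^ (a-1) < y ^ (b-1) := by
        apply Real.rpow_lt_rpow_of_exponent_gt hy0 hy.2
        rw [ha, hb]
        have : 1 / p < 2 / p := by
          exact (div_lt_div_iff_of_pos_right hp).mpr one_lt_two
        linarith
      have hab : (p+1) * a = (p+2) * b := by
        field_simp [ha, hb]
        rw [ha, hb]
        have h1 : p * (1/p) = 1 := mul_one_div_cancel hp.ne'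
        linear_combination h1
      have hA : 0 < y ^ (b-1) := Real.rpow_pos_of_pos hy0 _
      have hCa : 0 < (p+1) * a := by
        have : 0 < a := by
          rw [ha]; positivity
        positivity
      nlinarith [hlt, hab, hCa, hA]
  have h1mem : (1:ℝ) ∈ Set.Icc x 1 := Set.right_mem_Icc.mpr hx1.le
  have hxmem : x ∈ Set.Icc x 1 := Set.left_mem_Icc.mpr hx1.le
  have hlt := hanti hxmem h1mem hx1
  have hf1 : f 1 = 0 := by
    simp [hf, Real.one_rpow]
    ring
  rw [hf1] at hlt
  simpa [hf] using hlt
end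

section
/- Let R₀ > 1 and p > 0. Then the equation x^{-1/p} + (R₀/p)·x = 1 + R₀/p has a unique solution x in the open interval (0,1). -/
open Real

theorem stmt1 (R₀ p : ℝ) (hR : 1 < R₀) (hp : 0 < p) :
    ∃! x : ℝ, x ∈ Set.Ioo (0:ℝ) 1 ∧
      x ^ (-1 / p) + (R₀ / p) * x = 1 + R₀ / p := by
  set q : ℝ := -1 / p with hq
  set c : ℝ := R₀ / p with hc
  have hq0 : q < 0 := div_neg_of_neg_of_pos (by norm_num) hp
  have hq1 : q - 1 < 0 := by linarith
  have hc0 : 0 < c := div_pos (lt_trans one_pos hR) hp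
  set f : ℝ → ℝ := fun x => x ^ q + c * x with hf
  -- derivative of f at positive points
  have hderiv : ∀ x : ℝ, 0 < x → HasDerivAt f (q * x ^ (q - 1) + c) x := by
    intro x hx
    have h1 : HasDerivAt (fun x : ℝ => x ^ q) (q * x ^ (q - 1)) x :=
      Real.hasDerivAt_rpow_const (Or.inl (ne_of_gt hx))
    have h2 : HasDerivAt (fun x : ℝ => c * x) c x := by
      simpa using (hasDerivAt_id x).const_mul c
    exact h1.add h2
  have hcont : ContinuousOn f (Set.Ioi (0:ℝ)) := fun x hx =>
    ((hderiv x hx).differentiableAt.continuousAt).continuousWithinAt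
  have hderiv_eq : ∀ x : ℝ, 0 < x → deriv f x = q * x ^ (q - 1) + c := fun x hx =>
    (hderiv x hx).deriv
  -- strict monotonicity of the derivative
  have hmono : StrictMonoOn (deriv f) (interior (Set.Ioi (0:ℝ))) := by
    rw [interior_Ioi]
    intro x hx y hy hxy
    rw [hderiv_eq x hx, hderiv_eq y hy]
    have h1 : y ^ (q - 1) < x ^ (q - 1) := Real.rpow_lt_rpow_of_neg hx hxy hq1
    nlinarith
  have hconv : StrictConvexOn ℝ (Set.Ioi (0:ℝ)) f :=
    StrictMonoOn.strictConvexOn_of_deriv (convex_Ioi 0) hcont hmono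
  have hf1 : f 1 = 1 + c := by simp [hf, Real.one_rpow]
  -- the point a below which the derivative is negative
  set a : ℝ := R₀ ^ (q - 1)⁻¹ with ha
  have ha0 : 0 < a := Real.rpow_pos_of_pos (lt_trans one_pos hR) _
  have ha1 : a < 1 :=
    Real.rpow_lt_one_of_one_lt_of_neg hR (inv_lt_zero.mpr hq1)
  have haR : a ^ (q - 1) = R₀ :=
    Real.rpow_inv_rpow (le_of_lt (lt_trans one_pos hR)) (ne_of_lt hq1)
  -- f is strictly monotone on [a, 1]
  have hmonof : StrictMonoOn f (Set.Icc a 1) := by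
    apply strictMonoOn_of_deriv_pos (convex_Icc a 1)
    · exact hcont.mono (fun x hx => lt_of_lt_of_le ha0 hx.1)
    · intro x hx
      rw [interior_Icc] at hx
      have hx0 : 0 < x := lt_trans ha0 hx.1
      rw [hderiv_eq x hx0]
      have h1 : x ^ (q - 1) < R₀ := by
        rw [← haR]; exact Real.rpow_lt_rpow_of_neg ha0 hx.1 hq1
      have h2 : q * x ^ (q - 1) + c = (R₀ - x ^ (q - 1)) / p := by
        rw [hq, hc]; field_simp; ring
      rw [h2]
      exact div_pos (by linarith) hp
  set b : ℝ := (a + 1) / 2 with hb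
  have hab : a < b := by rw [hb]; linarith
  have hb1 : b < 1 := by rw [hb]; linarith
  have hb0 : 0 < b := lt_trans ha0 hab
  have hfb : f b < 1 + c := by
    rw [← hf1]
    exact hmonof ⟨le_of_lt hab, le_of_lt hb1⟩ ⟨le_of_lt ha1, le_refl 1⟩ hb1
  -- a small point where f exceeds 1 + c
  set m : ℝ := min b ((1 + c) ^ (-p)) with hm
  have hm0 : 0 < m := lt_min hb0 (Real.rpow_pos_of_pos (by linarith) _)
  set u : ℝ := m / 2 with hu
  have hu0 : 0 < u := by positivity
  have hub : u < b := lt_of_lt_of_le (by linarith) (min_le_left _ _)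
  have hulow : u < (1 + c) ^ (-p) := lt_of_lt_of_le (by linarith) (min_le_right _ _)
  have hfu : 1 + c < f u := by
    have h1 : ((1 + c) ^ (-p)) ^ q < u ^ q :=
      Real.rpow_lt_rpow_of_neg hu0 hulow hq0
    have hpq : (-p) * q = 1 := by rw [hq]; field_simp
    have h2 : ((1 + c) ^ (-p)) ^ q = 1 + c := by
      rw [← Real.rpow_mul (by linarith : (0:ℝ) ≤ 1 + c), hpq, Real.rpow_one]
    have h3 : 0 < c * u := by positivity
    have h4 : 1 + c < u ^ q := h2 ▸ h1
    show 1 + c < u ^ q + c * u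
    linarith
  -- existence via IVT on [u, b]
  have hcont' : ContinuousOn f (Set.Icc u b) :=
    hcont.mono (fun x hx => lt_of_lt_of_le hu0 hx.1)
  have hivt := intermediate_value_Icc' (le_of_lt hub) hcont'
  have hmem : (1 + c) ∈ Set.Icc (f b) (f u) := ⟨le_of_lt hfb, le_of_lt hfu⟩
  obtain ⟨x, hxmem, hfx⟩ := hivt hmem
  have hx0 : 0 < x := lt_of_lt_of_le hu0 hxmem.1
  have hx1 : x < 1 := lt_of_le_of_lt hxmem.2 hb1
  -- key uniqueness fact from strict convexity
  have key : ∀ r s : ℝ, r ∈ Set.Ioo (0:ℝ) 1 → s ∈ Set.Ioo (0:ℝ) 1 → r < s →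
      f r = 1 + c → f s = 1 + c → False := by
    intro r s hrm hsm hrs hfr hfs
    set t : ℝ := (1 - s) / (1 - r) with ht
    have h1r : 0 < 1 - r := by linarith [hrm.2]
    have ht0 : 0 < t := div_pos (by linarith [hsm.2]) h1r
    have ht1 : t < 1 := (div_lt_one h1r).mpr (by linarith)
    have hsum : t + (1 - t) = 1 := by ring
    have hcomb : t • r + (1 - t) • (1:ℝ) = s := by
      have hts : t * (1 - r) = 1 - s := by rw [ht]; field_simp
      simp only [smul_eq_mul]
      linear_combination -hts
    have hne : r ≠ 1 := ne_of_lt hrm.2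
    have := hconv.2 (Set.mem_Ioi.mpr hrm.1) (Set.mem_Ioi.mpr one_pos) hne ht0
      (by linarith) hsum
    rw [hcomb, hfs, hfr, hf1] at this
    have : (1:ℝ) + c < 1 + c := by
      calc (1:ℝ) + c < t * (1 + c) + (1 - t) * (1 + c) := by
            simpa [smul_eq_mul] using this
        _ = 1 + c := by ring
    exact lt_irrefl _ this
  refine ⟨x, ⟨⟨hx0, hx1⟩, hfx⟩, ?_⟩
  intro y ⟨hym, hyeq⟩
  by_contra hne
  rcases lt_or_gt_of_ne hne with h | h
  · exact key y x hym ⟨hx0, hx1⟩ h hyeq hfx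
  · exact key x y ⟨hx0, hx1⟩ hym h hfx hyeq
end

section
/- Let R₀ > 1 and p > 0, and let S∞(p) ∈ (0,1) denote the unique solution of x^{-1/p} + (R₀/p)·x = 1 + R₀/p in (0,1). Then S∞ is a strictly decreasing function of p. -/
open Real

/-- The function `p ↦ p * (exp (u/p) - 1)` is strictly decreasing for `u > 0`. -/
lemma aux_slope {u p q : ℝ} (hu : 0 < u) (hp : 0 < p) (hpq : p < q) :
    q * (Real.exp (u / q) - 1) < p * (Real.exp (u / p) - 1) := by
  have hq : 0 < q := hp.trans hpq
  set s := u / q with hs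
  set t := u / p with ht
  have hs0 : 0 < s := div_pos hu hq
  have ht0 : 0 < t := div_pos hu hp
  have hst : s < t := div_lt_div_of_pos_left hu hp hpq
  have key : (Real.exp s - Real.exp 0) / (s - 0) < (Real.exp t - Real.exp 0) / (t - 0) :=
    strictConvexOn_exp.secant_strict_mono (Set.mem_univ 0) (Set.mem_univ s) (Set.mem_univ t)
      hs0.ne' ht0.ne' hst
  rw [Real.exp_zero, sub_zero, sub_zero] at key
  have h1 : q * (Real.exp s - 1) = u * ((Real.exp s - 1) / s) := by
    field_simp [hs]
    rw [hs]; field_simp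
  have h2 : p * (Real.exp t - 1) = u * ((Real.exp t - 1) / t) := by
    field_simp [ht]
    rw [ht]; field_simp
  rw [h1, h2]
  exact mul_lt_mul_of_pos_left key hu

theorem stmt2 (R₀ : ℝ) (hR : 1 < R₀) (S : ℝ → ℝ)
    (hS : ∀ p, 0 < p → S p ∈ Set.Ioo (0:ℝ) 1 ∧
      (S p) ^ (-1 / p) + (R₀ / p) * S p = 1 + R₀ / p) :
    StrictAntiOn S (Set.Ioi 0) := by
  intro p hp q hq hpq
  simp only [Set.mem_Ioi] at hp hq
  obtain ⟨⟨ha0, ha1⟩, hea⟩ := hS p hp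
  obtain ⟨⟨hb0, hb1⟩, heb⟩ := hS q hq
  set a := S p with hA
  set b := S q with hB
  by_contra hle
  push_neg at hle  -- a ≤ b
  -- rewrite the equations
  have hea' : a ^ (-1 / p) = 1 + R₀ / p * (1 - a) := by ring_nf; ring_nf at hea; linarith
  have heb' : b ^ (-1 / q) = 1 + R₀ / q * (1 - b) := by ring_nf; ring_nf at heb; linarith
  -- rpow as exp
  have hub : 0 < -Real.log b := by
    have := Real.log_neg hb0 hb1; linarith
  have hrpow : ∀ r : ℝ, 0 < r → b ^ (-1 / r) = Real.exp (-Real.log b / r) := by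
    intro r hr
    rw [Real.rpow_def_of_pos hb0]
    congr 1
    ring
  -- key inequality from monotonicity in p
  have key : q * (b ^ (-1 / q) - 1) < p * (b ^ (-1 / p) - 1) := by
    rw [hrpow p hp, hrpow q hq]
    exact aux_slope hub hp hpq
  have hq0 : (0:ℝ) < q := hq
  have hRb : q * (b ^ (-1 / q) - 1) = R₀ * (1 - b) := by
    rw [heb']; field_simp; ring
  -- so p * (b^(-1/p) - 1) > R₀ * (1 - b)
  have hgt : 1 + R₀ / p * (1 - b) < b ^ (-1 / p) := by
    rw [hRb] at key
    have : R₀ * (1 - b) / p < b ^ (-1 / p) - 1 := by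
      rw [div_lt_iff₀ hp]
      linarith [key]
    have h' : R₀ / p * (1 - b) = R₀ * (1 - b) / p := by ring
    linarith [this]
  rcases eq_or_lt_of_le hle with heq | hab
  · -- a = b : contradiction with hea'
    rw [← heq] at hgt
    rw [hea'] at hgt
    linarith
  · -- a < b : convexity contradiction
    set θ : ℝ := (1 - b) / (1 - a) with hθ
    have h1a : 0 < 1 - a := by linarith
    have h1b : 0 < 1 - b := by linarith
    have hθ0 : 0 < θ := div_pos h1b h1a
    have hθ1 : θ < 1 := by
      rw [div_lt_one h1a]; linarith
    have hcomb : θ * a + (1 - θ) * 1 = b := by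
      have hθb : θ * (1 - a) = 1 - b := by rw [hθ]; exact div_mul_cancel₀ _ h1a.ne'
      linear_combination -hθb
    -- log b > θ log a + (1-θ) log 1
    have hlog : θ • Real.log a + (1 - θ) • Real.log 1 < Real.log (θ • a + (1 - θ) • 1) :=
      strictConcaveOn_log_Ioi.2 (Set.mem_Ioi.mpr ha0) (Set.mem_Ioi.mpr zero_lt_one)
        (by linarith) hθ0 (by linarith) (by ring)
    simp only [smul_eq_mul, Real.log_one, mul_zero, add_zero] at hlog
    rw [hcomb] at hlog
    -- exponent inequality
    have hc : 0 < 1 / p := by positivity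
    have hexp1 : -Real.log b / p < θ * (-Real.log a / p) + (1 - θ) * 0 := by
      rw [mul_zero, add_zero]
      rw [div_lt_iff₀ hp, mul_assoc, div_mul_cancel₀ _ hp.ne']
      nlinarith [hlog]
    have hexp2 : Real.exp (-Real.log b / p) <
        Real.exp (θ * (-Real.log a / p) + (1 - θ) * 0) := Real.exp_lt_exp.mpr hexp1
    have hexp3 : Real.exp (θ * (-Real.log a / p) + (1 - θ) * 0) ≤
        θ * Real.exp (-Real.log a / p) + (1 - θ) * Real.exp 0 := by
      have := convexOn_exp.2 (Set.mem_univ (-Real.log a / p)) (Set.mem_univ (0:ℝ))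
        hθ0.le (by linarith : (0:ℝ) ≤ 1 - θ) (by ring)
      simpa [smul_eq_mul] using this
    have hrpa : a ^ (-1 / p) = Real.exp (-Real.log a / p) := by
      rw [Real.rpow_def_of_pos ha0]; congr 1; ring
    have hfinal : b ^ (-1 / p) < θ * a ^ (-1 / p) + (1 - θ) := by
      rw [hrpow p hp, hrpa]
      calc Real.exp (-Real.log b / p) < _ := hexp2
        _ ≤ θ * Real.exp (-Real.log a / p) + (1 - θ) * Real.exp 0 := hexp3
        _ = θ * Real.exp (-Real.log a / p) + (1 - θ) := by rw [Real.exp_zero, mul_one]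
    rw [hea'] at hfinal
    have hθb : θ * (1 - a) = 1 - b := by
      rw [hθ]; exact div_mul_cancel₀ _ h1a.ne'
    have hkey : θ * (R₀ / p * (1 - a)) = R₀ / p * (1 - b) := by
      rw [← hθb]; ring
    nlinarith [hfinal, hgt, hkey]
end

section
/- Let R₀ > 1 and p > 0. Then the equation ((p+1)/R₀)·x^{-1/p} + x^{1+1/p} = 1 + (p+1)/R₀ has a unique solution x in the open interval (0,1). -/
open Real

theorem stmt3 (R₀ p : ℝ) (hR : 1 < R₀) (hp : 0 < p) :
    ∃! x : ℝ, x ∈ Set.Ioo (0:ℝ) 1 ∧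
      ((p + 1) / R₀) * x ^ (-1 / p) + x ^ (1 + 1 / p) = 1 + (p + 1) / R₀ := by
  have hR0 : (0:ℝ) < R₀ := by linarith
  set c : ℝ := (p + 1) / R₀ with hc
  have hc0 : 0 < c := div_pos (by linarith) hR0
  set F : ℝ → ℝ := fun x => c * x ^ (-1 / p) + x ^ (1 + 1 / p) with hFdef
  set s : ℝ := (p + 2) / p with hs
  have hs0 : 0 < s := div_pos (by linarith) hp
  set xs : ℝ := R₀ ^ (-(1 / s)) with hxs
  have hxs0 : 0 < xs := Real.rpow_pos_of_pos hR0 _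
  have hxs1 : xs < 1 :=
    Real.rpow_lt_one_of_one_lt_of_neg hR (neg_lt_zero.mpr (one_div_pos.mpr hs0))
  have hxss : xs ^ s = 1 / R₀ := by
    rw [hxs, ← Real.rpow_mul hR0.le]
    have : -(1 / s) * s = -1 := by field_simp
    rw [this, Real.rpow_neg_one, one_div]
  -- derivative
  have hderiv : ∀ x : ℝ, 0 < x →
      HasDerivAt F ((p + 1) * (x ^ s - 1 / R₀) * (x ^ (-1 / p - 1) / p)) x := by
    intro x hx
    have h1 : HasDerivAt (fun x : ℝ => x ^ (-1 / p)) ((-1 / p) * x ^ (-1 / p - 1)) x :=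
      Real.hasDerivAt_rpow_const (Or.inl hx.ne')
    have h2 : HasDerivAt (fun x : ℝ => x ^ (1 + 1 / p)) ((1 + 1 / p) * x ^ (1 + 1 / p - 1)) x :=
      Real.hasDerivAt_rpow_const (Or.inl hx.ne')
    have h3 := (h1.const_mul c).add h2
    have e1 : (1 + 1 / p - 1 : ℝ) = 1 / p := by ring
    have e2 : x ^ s * x ^ (-1 / p - 1) = x ^ (1 / p) := by
      rw [← Real.rpow_add hx]
      congr 1
      rw [hs]
      field_simp
      ring
    have : c * ((-1 / p) * x ^ (-1 / p - 1)) + (1 + 1 / p) * x ^ (1 + 1 / p - 1)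
        = (p + 1) * (x ^ s - 1 / R₀) * (x ^ (-1 / p - 1) / p) := by
      rw [e1, ← e2, hc]
      field_simp
      ring
    rwa [this] at h3
  -- F is continuous at positive points
  have hcont : ∀ x : ℝ, 0 < x → ContinuousAt F x := fun x hx => (hderiv x hx).continuousAt
  -- strict antitone on (0, xs]
  have hanti : StrictAntiOn F (Set.Ioc 0 xs) := by
    apply strictAntiOn_of_deriv_neg (convex_Ioc _ _)
    · exact fun x hx => (hcont x hx.1).continuousWithinAt
    · intro x hx
      rw [interior_Ioc] at hx
      rw [(hderiv x hx.1).deriv]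
      apply mul_neg_of_neg_of_pos
      · have : x ^ s < 1 / R₀ := by
          rw [← hxss]
          exact Real.rpow_lt_rpow hx.1.le hx.2 hs0
        nlinarith
      · exact div_pos (Real.rpow_pos_of_pos hx.1 _) hp
  -- strict monotone on [xs, 1]
  have hmono : StrictMonoOn F (Set.Icc xs 1) := by
    apply strictMonoOn_of_deriv_pos (convex_Icc _ _)
    · exact fun x hx => (hcont x (lt_of_lt_of_le hxs0 hx.1)).continuousWithinAt
    · intro x hx
      rw [interior_Icc] at hx
      have hx0 : 0 < x := lt_trans hxs0 hx.1
      rw [(hderiv x hx0).deriv]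
      apply mul_pos
      · have : 1 / R₀ < x ^ s := by
          rw [← hxss]
          exact Real.rpow_lt_rpow hxs0.le hx.1 hs0
        nlinarith
      · positivity
  have hF1 : F 1 = 1 + c := by
    simp [hFdef, Real.one_rpow]
    ring
  have hFxs : F xs < 1 + c := by
    rw [← hF1]
    exact hmono (Set.left_mem_Icc.mpr hxs1.le) (Set.right_mem_Icc.mpr hxs1.le) hxs1
  -- point near 0 where F is large
  set b : ℝ := (c / (1 + c)) ^ p with hb
  have hb0 : 0 < b := Real.rpow_pos_of_pos (div_pos hc0 (by linarith)) _
  set x₀ : ℝ := min (xs / 2) (b / 2) with hx₀def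
  have hx₀0 : 0 < x₀ := lt_min (by linarith) (by linarith)
  have hx₀xs : x₀ < xs := lt_of_le_of_lt (min_le_left _ _) (by linarith)
  have hx₀b : x₀ < b := lt_of_le_of_lt (min_le_right _ _) (by linarith)
  have hbinv : b ^ (-1 / p) = (1 + c) / c := by
    rw [hb, ← Real.rpow_mul (div_pos hc0 (by linarith)).le]
    have : p * (-1 / p) = -1 := by field_simp
    rw [this, Real.rpow_neg_one]
    rw [inv_div]
  have hFx₀ : 1 + c < F x₀ := by
    have h1 : b ^ (-1 / p) < x₀ ^ (-1 / p) :=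
      Real.rpow_lt_rpow_of_neg hx₀0 hx₀b (by
        rw [neg_div]
        exact neg_lt_zero.mpr (one_div_pos.mpr hp))
    rw [hbinv] at h1
    have h2 : 1 + c < c * x₀ ^ (-1 / p) := by
      have h4 := (mul_lt_mul_iff_right₀ hc0).mpr h1
      rw [mul_comm c ((1 + c) / c), div_mul_cancel₀ _ hc0.ne'] at h4
      exact h4
    have h3 : 0 < x₀ ^ (1 + 1 / p) := Real.rpow_pos_of_pos hx₀0 _
    show 1 + c < c * x₀ ^ (-1 / p) + x₀ ^ (1 + 1 / p)
    linarith
  -- IVT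
  have hcontOn : ContinuousOn F (Set.Icc x₀ xs) :=
    fun x hx => (hcont x (lt_of_lt_of_le hx₀0 hx.1)).continuousWithinAt
  have hIVT := intermediate_value_Ioo' hx₀xs.le hcontOn
  have hmem : (1 + c) ∈ Set.Ioo (F xs) (F x₀) := ⟨hFxs, hFx₀⟩
  obtain ⟨x, hxmem, hxeq⟩ := hIVT hmem
  -- any root in (0,1) lies in (0, xs]
  have hloc : ∀ y ∈ Set.Ioo (0:ℝ) 1, F y = 1 + c → y ∈ Set.Ioc 0 xs := by
    intro y hy hyeq
    refine ⟨hy.1, ?_⟩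
    by_contra h
    push_neg at h
    have : F y < F 1 := hmono ⟨h.le, hy.2.le⟩ (Set.right_mem_Icc.mpr hxs1.le) hy.2
    rw [hF1, hyeq] at this
    exact lt_irrefl _ this
  refine ⟨x, ⟨⟨lt_trans hx₀0 hxmem.1, lt_trans hxmem.2 hxs1⟩, hxeq⟩, ?_⟩
  intro y hy
  have hy1 : y ∈ Set.Ioc 0 xs := hloc y hy.1 hy.2
  have hx1 : x ∈ Set.Ioc 0 xs := ⟨lt_trans hx₀0 hxmem.1, hxmem.2.le⟩
  have hyF : F y = 1 + c := hy.2
  exact hanti.injOn hy1 hx1 (by rw [hyF, hxeq])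
end

section
/- Let R₀ > 1 and p > 0, and let S*∞(p) ∈ (0,1) be the unique solution of ((p+1)/R₀)·x^{-1/p} + x^{1+1/p} = 1 + (p+1)/R₀ in (0,1). Then S*∞ is a strictly decreasing function of p. -/
open Real

/-- The secant slope of `exp` at `0`: `(exp t - 1)/t`. -/
private noncomputable def sec (t : ℝ) : ℝ := (Real.exp t - 1) / t

private lemma sec_strictMono {a b : ℝ} (ha : a ≠ 0) (hb : b ≠ 0) (hab : a < b) :
    sec a < sec b := by
  have := strictConvexOn_exp.secant_strict_mono (a := 0) (x := a) (y := b)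
    (Set.mem_univ _) (Set.mem_univ _) (Set.mem_univ _) ha hb hab
  simpa [sec, Real.exp_zero] using this

private lemma sec_pos {t : ℝ} (ht : t ≠ 0) : 0 < sec t := by
  rcases lt_or_gt_of_ne ht with h | h
  · have : Real.exp t < 1 := by
      rw [← Real.exp_zero]; exact Real.exp_lt_exp.2 h
    exact div_pos_of_neg_of_neg (by linarith) h
  · have : 1 < Real.exp t := by
      rw [← Real.exp_zero]; exact Real.exp_lt_exp.2 h
    exact div_pos (by linarith) h

private lemma alg {R₀ p L A B : ℝ} (hp : 0 < p) (hL : 0 < L)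
    (h : (p + 1) * (A - 1) = R₀ * (1 - B)) :
    (A - 1) / (L / p) = R₀ * ((B - 1) / (-(L + L / p))) := by
  have h2 : p ≠ 0 := ne_of_gt hp
  have h3 : L + L / p ≠ 0 := ne_of_gt (by positivity)
  have h1 : L ≠ 0 := ne_of_gt hL
  have hs : (0:ℝ) < L / p := div_pos hL hp
  have hm : (0:ℝ) < L + L / p := by positivity
  have hrhs : R₀ * ((B - 1) / (-(L + L / p))) = R₀ * (1 - B) / (L + L / p) := by
    rw [div_neg]; ring
  rw [hrhs, div_eq_div_iff (ne_of_gt hs) (ne_of_gt hm)]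
  linear_combination (norm := (field_simp; ring)) (L / p) * h

/-- Key reformulation: if `x = S p` solves the equation, then
`sec (L/p) = R₀ * sec (-(L + L/p))` where `L = -log x`. -/
private lemma key (R₀ p x : ℝ) (hp : 0 < p) (hx0 : 0 < x) (hx1 : x < 1)
    (heq : ((p + 1) / R₀) * x ^ (-1 / p) + x ^ (1 + 1 / p) = 1 + (p + 1) / R₀) :
    sec (-Real.log x / p) = R₀ * sec (-(-Real.log x + -Real.log x / p)) := by
  set L : ℝ := -Real.log x with hL
  have hLpos : 0 < L := by
    have := Real.log_neg hx0 hx1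
    simp [hL]; linarith
  have hxpow1 : x ^ (-1 / p) = Real.exp (L / p) := by
    rw [Real.rpow_def_of_pos hx0]
    ring_nf
    congr 1; rw [hL]; ring
  have hxpow2 : x ^ (1 + 1 / p) = Real.exp (-(L + L / p)) := by
    rw [Real.rpow_def_of_pos hx0]
    congr 1
    field_simp [hL]
    ring
  rw [hxpow1, hxpow2] at heq
  show (Real.exp (L / p) - 1) / (L / p)
      = R₀ * ((Real.exp (-(L + L / p)) - 1) / (-(L + L / p)))
  set A := Real.exp (L / p) with hA
  set B := Real.exp (-(L + L / p)) with hB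
  have hsne : L / p ≠ 0 := ne_of_gt (div_pos hLpos hp)
  have hmne : L + L / p ≠ 0 := ne_of_gt (by positivity)
  have hR0 : R₀ ≠ 0 := by
    intro h
    rw [h] at heq
    simp [div_zero] at heq
    have h1 := div_pos hLpos hp
    have hB1 : B < 1 := by
      rw [hB, ← Real.exp_zero]
      exact Real.exp_lt_exp.2 (by linarith)
    linarith
  have heq2 : (p + 1) * (A - 1) = R₀ * (1 - B) := by
    field_simp at heq
    linear_combination heq
  exact alg hp hLpos heq2

theorem stmt4 (R₀ : ℝ) (hR : 1 < R₀) (S : ℝ → ℝ)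
    (hS : ∀ p, 0 < p → S p ∈ Set.Ioo (0:ℝ) 1 ∧
      ((p + 1) / R₀) * (S p) ^ (-1 / p) + (S p) ^ (1 + 1 / p) = 1 + (p + 1) / R₀) :
    StrictAntiOn S (Set.Ioi 0) := by
  intro p hp q hq hpq
  simp only [Set.mem_Ioi] at hp hq
  obtain ⟨⟨hxp0, hxp1⟩, heqp⟩ := hS p hp
  obtain ⟨⟨hxq0, hxq1⟩, heqq⟩ := hS q hq
  set Lp : ℝ := -Real.log (S p) with hLp
  set Lq : ℝ := -Real.log (S q) with hLq
  have hLppos : 0 < Lp := by have := Real.log_neg hxp0 hxp1; simp [hLp]; linarith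
  have hLqpos : 0 < Lq := by have := Real.log_neg hxq0 hxq1; simp [hLq]; linarith
  have kp := key R₀ p (S p) hp hxp0 hxp1 heqp
  have kq := key R₀ q (S q) hq hxq0 hxq1 heqq
  by_contra hcon
  push_neg at hcon
  -- hcon : S p ≤ S q, so Lq ≤ Lp
  have hLle : Lq ≤ Lp := by
    have := Real.log_le_log hxp0 hcon
    simp [hLp, hLq]; linarith
  have hslt : Lq / q < Lp / p := by
    calc Lq / q ≤ Lp / q := by
          exact div_le_div_of_nonneg_right hLle (by linarith) |>.trans_eq rfl
      _ < Lp / p := by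
          apply div_lt_div_of_pos_left hLppos hp hpq
  have hmlt : Lq + Lq / q < Lp + Lp / p := by
    have : Lq / q < Lp / p := hslt
    linarith
  have hσ1 : sec (Lq / q) < sec (Lp / p) :=
    sec_strictMono (ne_of_gt (div_pos hLqpos hq)) (ne_of_gt (div_pos hLppos hp)) hslt
  have hσ2 : sec (-(Lp + Lp / p)) < sec (-(Lq + Lq / q)) :=
    sec_strictMono (by intro h; nlinarith [div_pos hLppos hp])
      (by intro h; nlinarith [div_pos hLqpos hq]) (by linarith)
  have hR0 : (0:ℝ) < R₀ := by linarith
  rw [kp, kq] at hσ1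
  nlinarith [hσ1, hσ2]
end

section
/- Fix R₀ > 1 and p > 0. Let S∞ ∈ (0,1) be the unique solution of x^{-1/p} + (R₀/p)x = 1 + R₀/p, and let S*∞ ∈ (0,1) be the unique solution of ((p+1)/R₀)x^{-1/p} + x^{1+1/p} = 1 + (p+1)/R₀. Then S*∞ > S∞. -/
open Real

lemma strictConvexOn_rpow_neg {q : ℝ} (hq : q < 0) :
    StrictConvexOn ℝ (Set.Ioi (0:ℝ)) fun x : ℝ => x ^ q := by
  apply strictConvexOn_of_deriv2_pos (convex_Ioi 0)
  · exact ContinuousOn.rpow_const continuousOn_id fun x hx => Or.inl (ne_of_gt hx)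
  · intro x hx
    rw [interior_Ioi, Set.mem_Ioi] at hx
    have hE : deriv (fun y : ℝ => y ^ q) =ᶠ[nhds x] fun y => q * y ^ (q - 1) := by
      filter_upwards [Ioi_mem_nhds hx] with y hy
      exact (Real.hasDerivAt_rpow_const (Or.inl (ne_of_gt hy))).deriv
    have h2 : deriv (deriv fun y : ℝ => y ^ q) x =
        q * ((q - 1) * x ^ (q - 1 - 1)) := by
      rw [hE.deriv_eq]
      exact ((Real.hasDerivAt_rpow_const (p := q - 1)
        (Or.inl (ne_of_gt hx))).const_mul q).deriv
    have h3 : (deriv^[2] (fun y : ℝ => y ^ q)) x =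
        q * ((q - 1) * x ^ (q - 1 - 1)) := by
      rw [show (deriv^[2] (fun y : ℝ => y ^ q)) =
        deriv (deriv fun y : ℝ => y ^ q) from rfl]
      exact h2
    rw [h3]
    have hpow : (0:ℝ) < x ^ (q - 1 - 1) := Real.rpow_pos_of_pos hx _
    nlinarith [mul_pos_of_neg_of_neg hq (show q - 1 < 0 by linarith)]

theorem stmt5 (R₀ p : ℝ) (hR : 1 < R₀) (hp : 0 < p)
    (Sinf Sstar : ℝ)
    (hS : Sinf ∈ Set.Ioo (0:ℝ) 1)
    (hSeq : Sinf ^ (-1 / p) + (R₀ / p) * Sinf = 1 + R₀ / p)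
    (hSstar : Sstar ∈ Set.Ioo (0:ℝ) 1)
    (hSstareq : ((p + 1) / R₀) * Sstar ^ (-1 / p) + Sstar ^ (1 + 1 / p) = 1 + (p + 1) / R₀) :
    Sinf < Sstar := by
  obtain ⟨hx0, hx1⟩ := hS
  obtain ⟨hs0, hs1⟩ := hSstar
  have hR0 : (0:ℝ) < R₀ := by linarith
  set x := Sinf with hxdef
  set t := x ^ (-1 / p) with htdef
  have ht0 : 0 < t := Real.rpow_pos_of_pos hx0 _
  have ht1 : 1 < t := by
    apply Real.one_lt_rpow_iff_of_pos hx0 |>.mpr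
    right
    constructor
    · exact hx1
    · rw [div_neg_iff]; right; constructor <;> linarith
  -- t ^ p = 1 / x
  have htp : t ^ p = x⁻¹ := by
    rw [htdef, ← Real.rpow_mul hx0.le]
    rw [show (-1 / p) * p = -1 by field_simp]
    exact Real.rpow_neg_one x
  -- From the equation: p * (t - 1) = R₀ * (1 - x)
  have heq : p * (t - 1) = R₀ * (1 - x) := by
    have h := hSeq
    field_simp at h ⊢
    nlinarith [h]
  -- Bernoulli: t ^ (p+1) > 1 + (p+1) * (t-1)
  have hber : 1 + (p + 1) * (t - 1) < t ^ (p + 1) := by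
    have := one_add_mul_self_lt_rpow_one_add (s := t - 1)
      (by linarith) (by intro h; nlinarith) (p := p + 1) (by linarith)
    rwa [show 1 + (t - 1) = t by ring] at this
  -- t ^ (p+1) = t^p * t = t / x
  have htp1 : t ^ (p + 1) = t / x := by
    rw [Real.rpow_add ht0, Real.rpow_one, htp, inv_mul_eq_div]
  -- Key: t > R₀ * x
  have hkey : R₀ * x < t := by
    rw [htp1] at hber
    have h2 : (1 + (p + 1) * (t - 1)) * x < t / x * x :=
      mul_lt_mul_of_pos_right hber hx0
    rw [div_mul_cancel₀ _ (ne_of_gt hx0)] at h2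
    nlinarith [heq, ht1, hx0, hx1]
  -- x ^ (1 + 1/p) = x / t
  have hx1p : x ^ (1 + 1 / p) = x / t := by
    rw [Real.rpow_add hx0, Real.rpow_one]
    have : x ^ (1 / p : ℝ) = t⁻¹ := by
      rw [htdef, ← Real.rpow_neg hx0.le, neg_div, neg_neg]
    rw [this]
    field_simp
  -- G(x) > 1 + (p+1)/R₀
  have hGx : 1 + (p + 1) / R₀ < (p + 1) / R₀ * x ^ (-1 / p) + x ^ (1 + 1 / p) := by
    rw [hx1p, ← htdef]
    have hnum : 0 < (p + 1) * t * t + R₀ * x - R₀ * t - (p + 1) * t := by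
      nlinarith [mul_pos (show (0:ℝ) < t - 1 by linarith)
        (show (0:ℝ) < t - R₀ * x by linarith), heq]
    have hfrac : (p + 1) / R₀ * t + x / t - (1 + (p + 1) / R₀) =
        ((p + 1) * t * t + R₀ * x - R₀ * t - (p + 1) * t) / (R₀ * t) := by
      field_simp
      ring
    have := div_pos hnum (mul_pos hR0 ht0)
    linarith [hfrac ▸ this]
  -- Strict convexity of G on Ioi 0
  set G : ℝ → ℝ := fun y => (p + 1) / R₀ * y ^ (-1 / p) + y ^ (1 + 1 / p) with hGdef
  have hq : (-1 / p : ℝ) < 0 := by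
    rw [neg_div]; exact neg_neg_iff_pos.mpr (by positivity)
  have hconv1 : ConvexOn ℝ (Set.Ioi (0:ℝ)) fun y : ℝ => (p + 1) / R₀ * y ^ (-1 / p) := by
    have := ((strictConvexOn_rpow_neg hq).convexOn).smul
      (c := (p + 1) / R₀) (by positivity)
    simpa [smul_eq_mul] using this
  have hconv2 : StrictConvexOn ℝ (Set.Ioi (0:ℝ)) fun y : ℝ => y ^ (1 + 1 / p) :=
    (strictConvexOn_rpow (by nlinarith [one_div_pos.mpr hp])).subset
      (fun y hy => Set.mem_Ici.mpr (le_of_lt (Set.mem_Ioi.mp hy))) (convex_Ioi 0)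
  have hG : StrictConvexOn ℝ (Set.Ioi (0:ℝ)) G :=
    hconv1.add_strictConvexOn hconv2
  -- G 1 = 1 + (p+1)/R₀
  have hG1 : G 1 = 1 + (p + 1) / R₀ := by
    simp only [hGdef, Real.one_rpow, mul_one]
    ring
  have hGs : G Sstar = 1 + (p + 1) / R₀ := hSstareq
  -- Conclude by contradiction
  by_contra hcon
  push_neg at hcon
  rcases eq_or_lt_of_le hcon with heqc | hlt
  · rw [← heqc] at hGx
    rw [hGdef] at hGs
    simp only at hGs
    linarith [hGs, hGx]
  · -- Sstar < x < 1 : convex combination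
    set a : ℝ := (1 - x) / (1 - Sstar) with hadef
    set b : ℝ := (x - Sstar) / (1 - Sstar) with hbdef
    have hd : (0:ℝ) < 1 - Sstar := by linarith
    have ha : 0 < a := div_pos (by linarith) hd
    have hb : 0 < b := div_pos (by linarith) hd
    have hab : a + b = 1 := by
      rw [hadef, hbdef, ← add_div, div_eq_one_iff_eq (ne_of_gt hd)]
      ring
    have hcomb : a • Sstar + b • (1:ℝ) = x := by
      rw [smul_eq_mul, smul_eq_mul, hadef, hbdef]
      field_simp
      ring
    have h2 := hG.2 (Set.mem_Ioi.mpr hs0) (Set.mem_Ioi.mpr one_pos)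
      (ne_of_lt hs1) ha hb hab
    rw [hcomb, hGs, hG1, smul_eq_mul, smul_eq_mul] at h2
    have : G x < 1 + (p + 1) / R₀ := by
      calc G x < a * (1 + (p + 1) / R₀) + b * (1 + (p + 1) / R₀) := h2
        _ = (a + b) * (1 + (p + 1) / R₀) := by ring
        _ = 1 + (p + 1) / R₀ := by rw [hab]; ring
    rw [hGdef] at this
    simp only at this
    linarith [hGx, this]
end

section
/- Let X be a nonnegative random variable with E[X] = 1 and finite variance Var(X), and let w ∈ (0,1). Then E[X·w^X] ≥ w + w·log(w)·Var(X). -/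
open Real MeasureTheory

lemma key10 {w x : ℝ} (hw0 : 0 < w) (hx : 0 ≤ x) :
    w * x + w * Real.log w * (x ^ 2 - x) ≤ x * w ^ x := by
  have h1 : w + w * Real.log w * (x - 1) ≤ w ^ x := by
    rw [Real.rpow_def_of_pos hw0]
    have h2 : Real.exp (Real.log w * x) = w * Real.exp (Real.log w * x - Real.log w) := by
      rw [Real.exp_sub, Real.exp_log hw0]
      field_simp
    have h3 := Real.add_one_le_exp (Real.log w * x - Real.log w)
    nlinarith [hw0]
  nlinarith [mul_le_mul_of_nonneg_left h1 hx]

theorem stmt10 {Ω : Type*} [MeasurableSpace Ω] (μ : Measure Ω) [IsProbabilityMeasure μ]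
    (X : Ω → ℝ) (hXm : Measurable X) (hXpos : ∀ ω, 0 ≤ X ω)
    (hmean : ∫ ω, X ω ∂μ = 1)
    (hX2 : Integrable (fun ω => (X ω) ^ 2) μ)
    (w : ℝ) (hw : w ∈ Set.Ioo (0:ℝ) 1)
    (hint : Integrable (fun ω => X ω * w ^ X ω) μ) :
    w + w * Real.log w * ((∫ ω, (X ω) ^ 2 ∂μ) - 1) ≤ ∫ ω, X ω * w ^ X ω ∂μ := by
  obtain ⟨hw0, hw1⟩ := hw
  have hX1 : Integrable X μ := by
    apply (hX2.add (integrable_const 1)).mono' hXm.aestronglyMeasurable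
    filter_upwards with ω
    have := hXpos ω
    simp only [Pi.add_apply, Real.norm_eq_abs, abs_of_nonneg this]
    nlinarith
  have hsub : Integrable (fun ω => (X ω) ^ 2 - X ω) μ := hX2.sub hX1
  have hg : Integrable (fun ω => w * X ω + w * Real.log w * ((X ω) ^ 2 - X ω)) μ :=
    (hX1.const_mul w).add (hsub.const_mul _)
  have hmono := integral_mono hg hint (fun ω => key10 hw0 (hXpos ω))
  have hcalc : ∫ ω, (w * X ω + w * Real.log w * ((X ω) ^ 2 - X ω)) ∂μ
      = w + w * Real.log w * ((∫ ω, (X ω) ^ 2 ∂μ) - 1) := by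
    rw [integral_add (hX1.const_mul w) (hsub.const_mul _),
        integral_const_mul, integral_const_mul, integral_sub hX2 hX1, hmean]
    ring
  linarith [hmono, hcalc.symm ▸ hmono]
end

section
/- Let X be a nonnegative random variable with E[X] = 1 and finite second moment, and let w ∈ (0,1). Then E[X·w^X] − w·E[X²] + E[X²] − 1 ≥ Var(X)·(w·log w + 1 − w), and if Var(X) > 0 this quantity is strictly positive. -/
open Real MeasureTheory

theorem stmt11 {Ω : Type*} [MeasurableSpace Ω] (μ : Measure Ω) [IsProbabilityMeasure μ]
    (X : Ω → ℝ) (hXm : Measurable X) (hXpos : ∀ ω, 0 ≤ X ω)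
    (hmean : ∫ ω, X ω ∂μ = 1)
    (hX2 : Integrable (fun ω => (X ω) ^ 2) μ)
    (w : ℝ) (hw : w ∈ Set.Ioo (0:ℝ) 1)
    (hint : Integrable (fun ω => X ω * w ^ X ω) μ) :
    ((∫ ω, (X ω) ^ 2 ∂μ) - 1) * (w * Real.log w + 1 - w)
      ≤ (∫ ω, X ω * w ^ X ω ∂μ) - w * (∫ ω, (X ω) ^ 2 ∂μ) + (∫ ω, (X ω) ^ 2 ∂μ) - 1 ∧
    (0 < (∫ ω, (X ω) ^ 2 ∂μ) - 1 →
      0 < (∫ ω, X ω * w ^ X ω ∂μ) - w * (∫ ω, (X ω) ^ 2 ∂μ) + (∫ ω, (X ω) ^ 2 ∂μ) - 1) := by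
  obtain ⟨hw0, hw1⟩ := hw
  have hlw : Real.log w < 0 := Real.log_neg hw0 hw1
  have hXint : Integrable X μ := by
    refine (hX2.add (integrable_const 1)).mono' hXm.aestronglyMeasurable ?_
    filter_upwards with ω
    simp only [Pi.add_apply]
    rw [Real.norm_eq_abs, abs_of_nonneg (hXpos ω)]
    nlinarith [sq_nonneg (X ω - 1)]
  have hpt : ∀ ω, w * X ω + w * Real.log w * ((X ω) ^ 2 - X ω) ≤ X ω * w ^ X ω := by
    intro ω
    have hx := hXpos ω
    have h1 : 1 + (X ω - 1) * Real.log w ≤ Real.exp ((X ω - 1) * Real.log w) := by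
      linarith [Real.add_one_le_exp ((X ω - 1) * Real.log w)]
    have h2 : w * Real.exp ((X ω - 1) * Real.log w) = w ^ X ω := by
      rw [Real.rpow_def_of_pos hw0,
        show (Real.log w * X ω) = Real.log w + (X ω - 1) * Real.log w by ring,
        Real.exp_add, Real.exp_log hw0]
    have h3 : w * (1 + (X ω - 1) * Real.log w) ≤ w ^ X ω := by
      rw [← h2]; exact mul_le_mul_of_nonneg_left h1 hw0.le
    nlinarith [mul_le_mul_of_nonneg_left h3 hx]
  have hLint : Integrable (fun ω => w * X ω + w * Real.log w * ((X ω) ^ 2 - X ω)) μ :=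
    (hXint.const_mul w).add ((hX2.sub hXint).const_mul _)
  have hineq : ∫ ω, (w * X ω + w * Real.log w * ((X ω) ^ 2 - X ω)) ∂μ
      ≤ ∫ ω, X ω * w ^ X ω ∂μ := integral_mono hLint hint fun ω => hpt ω
  have hA : Integrable (fun ω => w * X ω) μ := hXint.const_mul w
  have hB : Integrable (fun ω => w * Real.log w * ((X ω) ^ 2 - X ω)) μ :=
    (hX2.sub hXint).const_mul _
  have hcalc : ∫ ω, (w * X ω + w * Real.log w * ((X ω) ^ 2 - X ω)) ∂μ
      = w + w * Real.log w * ((∫ ω, (X ω) ^ 2 ∂μ) - 1) := by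
    rw [integral_add hA hB,
      MeasureTheory.integral_const_mul, MeasureTheory.integral_const_mul, integral_sub hX2 hXint, hmean]
    ring
  rw [hcalc] at hineq
  have hpos : 0 < w * Real.log w + 1 - w := by
    have h := Real.add_one_lt_exp (x := -Real.log w) (by linarith)
    have he : Real.exp (-Real.log w) = w⁻¹ := by rw [Real.exp_neg, Real.exp_log hw0]
    rw [he] at h
    have : w * (-Real.log w + 1) < w * w⁻¹ := mul_lt_mul_of_pos_left h hw0
    rw [mul_inv_cancel₀ (ne_of_gt hw0)] at this
    nlinarith
  constructor
  · nlinarith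
  · intro h
    nlinarith [mul_pos h hpos]
end

section
/- Let X be a nonnegative random variable with E[X] = 1, E[X²] < ∞ and Var(X) > 0. Fix R₀ > 1 and set Φ₁(w) = E[X·w^X], Φ₂(1) = E[X²]. Define H(w) = Φ₁(w)/Φ₂(1) − log(w)/R₀ − 1/Φ₂(1) and h(w) = w − log(w)/R₀ − 1 for w ∈ (0,1). Then H(w) > h(w) for all w ∈ (0,1). -/
open Real MeasureTheory

/-- tangent line bound for convex `w ^ x`, multiplied by nonneg `x`. -/
private lemma tangent13 (w m x : ℝ) (hw0 : 0 < w) (hx : 0 ≤ x) :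
    x * (w ^ m + w ^ m * Real.log w * (x - m)) ≤ x * w ^ x := by
  apply mul_le_mul_of_nonneg_left _ hx
  have h1 : 1 + (x - m) * Real.log w ≤ Real.exp ((x - m) * Real.log w) := by
    linarith [Real.add_one_le_exp ((x - m) * Real.log w)]
  have hxw : w ^ x = Real.exp (x * Real.log w) := by
    rw [Real.rpow_def_of_pos hw0, mul_comm]
  have hmw : w ^ m = Real.exp (m * Real.log w) := by
    rw [Real.rpow_def_of_pos hw0, mul_comm]
  have hmp : (0:ℝ) < w ^ m := Real.rpow_pos_of_pos hw0 m
  calc w ^ m + w ^ m * Real.log w * (x - m)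
      = w ^ m * (1 + (x - m) * Real.log w) := by ring
    _ ≤ w ^ m * Real.exp ((x - m) * Real.log w) :=
        mul_le_mul_of_nonneg_left h1 hmp.le
    _ = w ^ x := by rw [hxw, hmw, ← Real.exp_add]; ring_nf

private lemma key13 (w m : ℝ) (hw0 : 0 < w) (hw1 : w < 1) (hm : 1 < m) :
    1 + (w - 1) * m < w ^ m := by
  have hlw : Real.log w < 0 := Real.log_neg hw0 hw1
  have hwl : w - 1 < w * Real.log w := by
    have h := Real.log_lt_sub_one_of_pos (x := 1 / w) (by positivity)
      (by intro h; rw [div_eq_one_iff_eq (ne_of_gt hw0)] at h; linarith)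
    rw [Real.log_div one_ne_zero (ne_of_gt hw0), Real.log_one] at h
    have h2 := mul_lt_mul_of_pos_left h hw0
    have h3 : w * (1 / w - 1) = 1 - w := by field_simp
    nlinarith
  set g : ℝ → ℝ := fun t => Real.exp (t * Real.log w) - (w - 1) * t with hg
  have hderiv : ∀ t : ℝ, HasDerivAt g (Real.exp (t * Real.log w) * Real.log w - (w - 1)) t := by
    intro t
    have h1 : HasDerivAt (fun t : ℝ => t * Real.log w) (Real.log w) t := by
      simpa using (hasDerivAt_id t).mul_const (Real.log w)
    have h2 : HasDerivAt (fun t : ℝ => (w - 1) * t) (w - 1) t := by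
      simpa using (hasDerivAt_id t).const_mul (w - 1)
    have h3 := (h1.exp).sub h2
    exact h3
  have hmono : StrictMonoOn g (Set.Icc 1 m) := by
    apply strictMonoOn_of_deriv_pos (convex_Icc 1 m)
    · exact Continuous.continuousOn (by continuity)
    · intro t ht
      rw [interior_Icc] at ht
      rw [(hderiv t).deriv]
      have h1 : Real.exp (t * Real.log w) < Real.exp (1 * Real.log w) := by
        apply Real.exp_lt_exp.mpr
        nlinarith [ht.1]
      rw [one_mul, Real.exp_log hw0] at h1
      nlinarith
  have := hmono (Set.mem_Icc.mpr ⟨le_refl 1, hm.le⟩) (Set.mem_Icc.mpr ⟨hm.le, le_refl m⟩) hm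
  have hg1 : g 1 = 1 := by simp [hg, Real.exp_log hw0]
  have hgm : g m = w ^ m - (w - 1) * m := by
    have hmw : w ^ m = Real.exp (m * Real.log w) := by
      rw [Real.rpow_def_of_pos hw0, mul_comm]
    simp [hg, hmw]
  rw [hg1, hgm] at this
  linarith

theorem stmt13 {Ω : Type*} [MeasurableSpace Ω] (μ : Measure Ω) [IsProbabilityMeasure μ]
    (X : Ω → ℝ) (hXm : Measurable X) (hXpos : ∀ ω, 0 ≤ X ω)
    (hmean : ∫ ω, X ω ∂μ = 1)
    (hX2 : Integrable (fun ω => (X ω) ^ 2) μ)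
    (hvar : 0 < (∫ ω, (X ω) ^ 2 ∂μ) - 1)
    (R₀ : ℝ) (hR : 1 < R₀)
    (hint : ∀ w ∈ Set.Ioo (0:ℝ) 1, Integrable (fun ω => X ω * w ^ X ω) μ) :
    ∀ w ∈ Set.Ioo (0:ℝ) 1,
      w - Real.log w / R₀ - 1
        < (∫ ω, X ω * w ^ X ω ∂μ) / (∫ ω, (X ω) ^ 2 ∂μ)
          - Real.log w / R₀ - 1 / (∫ ω, (X ω) ^ 2 ∂μ) := by
  intro w hw
  obtain ⟨hw0, hw1⟩ := hw
  set m : ℝ := ∫ ω, (X ω) ^ 2 ∂μ with hmdef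
  have hm1 : 1 < m := by linarith
  have hm0 : 0 < m := by linarith
  -- X is integrable
  have hX1 : Integrable X μ := by
    apply (hX2.add (integrable_const 1)).mono' hXm.aestronglyMeasurable
    filter_upwards with ω
    rw [Real.norm_eq_abs, abs_of_nonneg (hXpos ω)]
    simp only [Pi.add_apply]
    nlinarith [hXpos ω, sq_nonneg (X ω - 1)]
  set a : ℝ := w ^ m with hadef
  set c : ℝ := w ^ m * Real.log w with hcdef
  -- integral of the tangent function equals a
  have heq : (fun ω => X ω * (a + c * (X ω - m)))
      = (fun ω => (a - c * m) * X ω + c * (X ω) ^ 2) := by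
    funext ω; ring
  have hIntL : Integrable (fun ω => X ω * (a + c * (X ω - m))) μ := by
    rw [heq]
    exact (hX1.const_mul _).add (hX2.const_mul _)
  have hIval : ∫ ω, X ω * (a + c * (X ω - m)) ∂μ = a := by
    rw [heq, integral_add (hX1.const_mul _) (hX2.const_mul _),
      integral_const_mul, integral_const_mul, hmean, ← hmdef]
    ring
  have hmono : ∫ ω, X ω * (a + c * (X ω - m)) ∂μ ≤ ∫ ω, X ω * w ^ X ω ∂μ := by
    apply integral_mono hIntL (hint w ⟨hw0, hw1⟩)
    intro ω
    exact tangent13 w m (X ω) hw0 (hXpos ω)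
  rw [hIval] at hmono
  have hkey : 1 + (w - 1) * m < a := key13 w m hw0 hw1 hm1
  set Φ : ℝ := ∫ ω, X ω * w ^ X ω ∂μ with hΦdef
  have h1 : (w - 1) * m < Φ - 1 := by linarith
  have h2 : w - 1 < (Φ - 1) / m := (lt_div_iff₀ hm0).mpr h1
  have h3 : (Φ - 1) / m = Φ / m - 1 / m := by ring
  linarith [h2, h3.symm ▸ h2]
end

section
/- Let p > 0 and φ(x) = (p^p/Γ(p))·x^{p−1}·e^{−px}. For w ∈ (0,1] define S(w) = ∫₀^∞ w^x φ(x) dx. Then ∫₀^∞ x·w^x φ(x) dx = S(w)^{1+1/p} and ∫₀^∞ x²·w^x φ(x) dx = (1 + 1/p)·S(w)^{1+2/p}. -/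
open Real MeasureTheory

lemma aux_int (p q w : ℝ) (hq : 0 < q) (hw : 0 < w) (ha : 0 < p - Real.log w) :
    ∫ x in Set.Ioi (0:ℝ), x ^ (q - 1) * (w ^ x * Real.exp (-p * x))
      = (1 / (p - Real.log w)) ^ q * Real.Gamma q := by
  rw [← Real.integral_rpow_mul_exp_neg_mul_Ioi hq ha]
  refine setIntegral_congr_fun measurableSet_Ioi (fun x hx => ?_)
  rw [Real.rpow_def_of_pos hw, ← Real.exp_add]
  congr 1
  ring

theorem stmt16 (p : ℝ) (hp : 0 < p) (w : ℝ) (hw : w ∈ Set.Ioc (0:ℝ) 1)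
    (S : ℝ) (hS : S = ∫ x in Set.Ioi (0:ℝ),
      w ^ x * (p ^ p / Real.Gamma p * x ^ (p - 1) * Real.exp (-p * x))) :
    (∫ x in Set.Ioi (0:ℝ),
        x * w ^ x * (p ^ p / Real.Gamma p * x ^ (p - 1) * Real.exp (-p * x)))
      = S ^ (1 + 1 / p) ∧
    (∫ x in Set.Ioi (0:ℝ),
        x ^ 2 * w ^ x * (p ^ p / Real.Gamma p * x ^ (p - 1) * Real.exp (-p * x)))
      = (1 + 1 / p) * S ^ (1 + 2 / p) := by
  obtain ⟨hw0, hw1⟩ := hw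
  set a : ℝ := p - Real.log w with ha_def
  have hlog : Real.log w ≤ 0 := Real.log_nonpos hw0.le hw1
  have ha : 0 < a := by simp only [ha_def]; linarith
  have hG : 0 < Real.Gamma p := Real.Gamma_pos_of_pos hp
  set C : ℝ := p ^ p / Real.Gamma p with hC
  -- compute S
  have hS' : S = (p / a) ^ p := by
    rw [hS]
    have : (∫ x in Set.Ioi (0:ℝ), w ^ x * (C * x ^ (p - 1) * Real.exp (-p * x)))
        = ∫ x in Set.Ioi (0:ℝ), C * (x ^ (p - 1) * (w ^ x * Real.exp (-p * x))) := by
      refine setIntegral_congr_fun measurableSet_Ioi (fun x hx => ?_); ring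
    rw [this, integral_const_mul, aux_int p p w hp hw0 ha]
    rw [hC, Real.div_rpow hp.le ha.le, Real.div_rpow (by norm_num) ha.le, Real.one_rpow]
    field_simp
  have hpa : 0 < p / a := div_pos hp ha
  -- first moment
  have hI1 : (∫ x in Set.Ioi (0:ℝ),
      x * w ^ x * (C * x ^ (p - 1) * Real.exp (-p * x))) = (p / a) ^ (p + 1) := by
    have : (∫ x in Set.Ioi (0:ℝ), x * w ^ x * (C * x ^ (p - 1) * Real.exp (-p * x)))
        = ∫ x in Set.Ioi (0:ℝ), C * (x ^ ((p + 1) - 1) * (w ^ x * Real.exp (-p * x))) := by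
      refine setIntegral_congr_fun measurableSet_Ioi (fun x hx => ?_)
      have hx0 : (0:ℝ) < x := hx
      have : x ^ ((p + 1) - 1) = x * x ^ (p - 1) := by
        rw [show (p + 1) - 1 = 1 + (p - 1) by ring, Real.rpow_add hx0, Real.rpow_one]
      rw [this]; ring
    rw [this, integral_const_mul, aux_int p (p + 1) w (by linarith) hw0 ha,
      Real.Gamma_add_one hp.ne', hC, Real.div_rpow hp.le ha.le,
      Real.div_rpow (by norm_num) ha.le, Real.one_rpow, Real.rpow_add hp, Real.rpow_one,
      Real.rpow_add ha, Real.rpow_one]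
    field_simp
  have hI2 : (∫ x in Set.Ioi (0:ℝ),
      x ^ 2 * w ^ x * (C * x ^ (p - 1) * Real.exp (-p * x))) = (p + 1) / p * (p / a) ^ (p + 2) := by
    have : (∫ x in Set.Ioi (0:ℝ), x ^ 2 * w ^ x * (C * x ^ (p - 1) * Real.exp (-p * x)))
        = ∫ x in Set.Ioi (0:ℝ), C * (x ^ ((p + 2) - 1) * (w ^ x * Real.exp (-p * x))) := by
      refine setIntegral_congr_fun measurableSet_Ioi (fun x hx => ?_)
      have hx0 : (0:ℝ) < x := hx
      have : x ^ ((p + 2) - 1) = x ^ (2:ℕ) * x ^ (p - 1) := by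
        rw [← Real.rpow_natCast x 2, ← Real.rpow_add hx0]
        congr 1; push_cast; ring
      rw [this]; ring
    rw [this, integral_const_mul, aux_int p (p + 2) w (by linarith) hw0 ha,
      show p + 2 = (p + 1) + 1 by ring, Real.Gamma_add_one (by linarith : p + 1 ≠ 0),
      Real.Gamma_add_one hp.ne', hC]
    rw [show (p + 1) + 1 = p + 2 by ring, Real.div_rpow hp.le ha.le,
      Real.div_rpow (by norm_num) ha.le, Real.one_rpow,
      show p + 2 = p + 1 + 1 by ring, Real.rpow_add hp, Real.rpow_add hp, Real.rpow_one,
      Real.rpow_add ha, Real.rpow_add ha, Real.rpow_one]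
    field_simp
  constructor
  · rw [hI1, hS', ← Real.rpow_mul hpa.le]
    congr 1
    field_simp
  · rw [hI2, hS', ← Real.rpow_mul hpa.le]
    have h1 : p * (1 + 2 / p) = p + 2 := by field_simp
    have h2 : (p + 1) / p = 1 + 1 / p := by field_simp
    rw [h1, h2]
end
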